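/- arXiv:0802.4382 — 7 statements merged into one kernel-verified Lean document; each statement's English description precedes it below -/
import Mathlib

section
/- (Kantorovich inequality for measures) For any probability measure ν supported on [m,M] with 0 < m ≤ M < ∞, one has (∫λ dν)·(∫λ⁻¹ dν) ≤ (M+m)²/(4mM). -/
open MeasureTheory

theorem kantorovich_inequality_for_measures
    (m M : ℝ) (hm : 0 < m) (hmM : m ≤ M)
    (ν : Measure ℝ) [IsProbabilityMeasure ν]
    (hsupp : ν (Set.Icc m M)ᶜ = 0) :
    (∫ x, x ∂ν) * (∫ x, x⁻¹ ∂ν) ≤ (M + m) ^ 2 / (4 * m * M) := by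
  have hM : 0 < M := lt_of_lt_of_le hm hmM
  have hae : ∀ᵐ x ∂ν, x ∈ Set.Icc m M := by
    rw [ae_iff]
    exact hsupp
  have hint1 : Integrable (fun x : ℝ => x) ν := by
    refine Integrable.mono' (integrable_const M) aestronglyMeasurable_id ?_
    filter_upwards [hae] with x hx
    rw [Real.norm_eq_abs, abs_le]
    exact ⟨le_trans (by linarith) hx.1, hx.2⟩
  have hint2 : Integrable (fun x : ℝ => x⁻¹) ν := by
    refine Integrable.mono' (integrable_const m⁻¹) measurable_inv.aestronglyMeasurable ?_
    filter_upwards [hae] with x hx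
    have hx0 : 0 < x := lt_of_lt_of_le hm hx.1
    rw [Real.norm_eq_abs, abs_of_pos (inv_pos.2 hx0)]
    exact inv_anti₀ hm hx.1
  set A := ∫ x, x ∂ν with hA
  set B := ∫ x, x⁻¹ ∂ν with hB
  have hAm : m ≤ A := by
    have := integral_mono_ae (integrable_const m) hint1
      (by filter_upwards [hae] with x hx; exact hx.1)
    simpa using this
  have hAM : A ≤ M := by
    have := integral_mono_ae hint1 (integrable_const M)
      (by filter_upwards [hae] with x hx; exact hx.2)
    simpa using this
  have hB0 : 0 ≤ B := by
    refine integral_nonneg_of_ae ?_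
    filter_upwards [hae] with x hx
    exact inv_nonneg.2 (le_trans hm.le hx.1)
  have hBle : B ≤ (M + m - A) / (m * M) := by
    have hineq : ∀ᵐ x ∂ν, x⁻¹ ≤ (M + m - x) / (m * M) := by
      filter_upwards [hae] with x hx
      have hx0 : 0 < x := lt_of_lt_of_le hm hx.1
      rw [inv_eq_one_div, div_le_div_iff₀ hx0 (by positivity)]
      nlinarith [mul_nonneg (sub_nonneg.2 hx.1) (sub_nonneg.2 hx.2)]
    have hint3 : Integrable (fun x : ℝ => (M + m - x) / (m * M)) ν := by
      exact ((integrable_const (M + m)).sub hint1).div_const _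
    have := integral_mono_ae hint2 hint3 hineq
    calc B ≤ ∫ x, (M + m - x) / (m * M) ∂ν := this
      _ = (M + m - A) / (m * M) := by
          rw [integral_div, integral_sub (integrable_const _) hint1]
          simp [hA]
  have hA0 : 0 < A := lt_of_lt_of_le hm hAm
  calc A * B ≤ A * ((M + m - A) / (m * M)) :=
        mul_le_mul_of_nonneg_left hBle hA0.le
    _ ≤ (M + m) ^ 2 / (4 * m * M) := by
        rw [show A * ((M + m - A) / (m * M)) = A * (M + m - A) / (m * M) from
          (mul_div_assoc _ _ _).symm, div_le_div_iff₀ (by positivity) (by positivity)]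
        nlinarith [mul_nonneg (mul_pos hm hM).le (sq_nonneg (M + m - 2 * A))]
end

section
/- Under the transformation T on discrete probability measures given by [z_{k+1}]ᵢ = (1 - λᵢ/μ₁ᵏ)[z_k]ᵢ / (μ₂ᵏ/(μ₁ᵏ)² - 1)^{1/2}, the quantity L_k = μ₁ᵏ μ₋₁ᵏ satisfies L_{k+1} - L_k = (μ₁ᵏ / D_k²) · det M_k, where D_k = μ₂ᵏ - (μ₁ᵏ)² and M_k is the moment matrix [[μ₋₁ᵏ, 1, μ₁ᵏ],[1, μ₁ᵏ, μ₂ᵏ],[μ₁ᵏ, μ₂ᵏ, μ₃ᵏ]]. In particular L_{k+1} ≥ L_k. -/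
/-!
With `D = μ₂ - μ₁²`, the new weights are `(μ₁ - λᵢ) zᵢ / √D`, so each new moment is a quadratic
combination of old ones: `μ'ⱼ = (μ₁² μⱼ - 2 μ₁ μⱼ₊₁ + μⱼ₊₂) / D`. Taking `j = 1` and `j = -1` turns
`L_{k+1} - L_k` into a rational function of `μ₋₁, …, μ₃` whose numerator is `μ₁ det M`.
The moment matrix `M = ∑ᵢ (zᵢ² / λᵢ) vᵢ vᵢᵀ` with `vᵢ = (1, λᵢ, λᵢ²)` is positive semidefinite,
so `det M ≥ 0`, and `μ₁ > 0` gives the monotonicity.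
-/

open Finset

noncomputable def moment {ι : Type*} [Fintype ι] (l w : ι → ℝ) (j : ℤ) : ℝ :=
  ∑ i, l i ^ j * w i ^ 2

section Moment

variable {ι : Type*} [Fintype ι] (l w : ι → ℝ)

theorem moment_zero : moment l w 0 = ∑ i, w i ^ 2 := by simp [moment]

theorem moment_pos {l w : ι → ℝ} (hl : ∀ i, 0 < l i) (hw : w ≠ 0) (j : ℤ) :
    0 < moment l w j := by
  obtain ⟨i, hi⟩ := Function.ne_iff.mp hw
  exact sum_pos' (fun i _ => by have := hl i; positivity)
    ⟨i, mem_univ i, mul_pos (zpow_pos (hl i) j) (sq_pos_of_ne_zero hi)⟩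

theorem moment_const_mul (r : ℝ) (j : ℤ) :
    moment l (fun i => r * w i) j = r ^ 2 * moment l w j := by
  simp only [moment, mul_sum]
  exact sum_congr rfl fun i _ => by ring

theorem moment_sub_mul {l : ι → ℝ} (hl : ∀ i, l i ≠ 0) (a : ℝ) (j : ℤ) :
    moment l (fun i => (a - l i) * w i) j
      = a ^ 2 * moment l w j - 2 * a * moment l w (j + 1) + moment l w (j + 2) := by
  simp only [moment, mul_sum, ← sum_sub_distrib, ← sum_add_distrib]
  refine sum_congr rfl fun i _ => ?_
  rw [zpow_add₀ (hl i), zpow_add₀ (hl i)]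
  simp only [zpow_ofNat]
  ring

theorem moment_transform {l : ι → ℝ} (hl : ∀ i, l i ≠ 0) {m : ℝ} (hm : m ≠ 0) (s : ℝ) (j : ℤ) :
    moment l (fun i => (1 - l i / m) * w i / s) j
      = (m ^ 2 * moment l w j - 2 * m * moment l w (j + 1) + moment l w (j + 2)) /
          (m * s) ^ 2 := by
  have hw : (fun i => (1 - l i / m) * w i / s) = fun i => (m * s)⁻¹ * ((m - l i) * w i) := by
    funext i; rw [one_sub_div hm]; ring
  rw [hw, moment_const_mul, moment_sub_mul w hl]
  ring

theorem sum_div_mul_pow_eq_moment {l : ι → ℝ} (hl : ∀ i, l i ≠ 0) (k : ℕ) :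
    ∑ i, w i ^ 2 / l i * l i ^ k = moment l w (k - 1) := by
  refine sum_congr rfl fun i _ => ?_
  rw [zpow_sub₀ (hl i), zpow_one, zpow_natCast]
  ring

end Moment

theorem posSemidef_hankel {ι : Type*} [Fintype ι] {c : ι → ℝ} (hc : ∀ i, 0 ≤ c i) (x : ι → ℝ)
    (n : ℕ) : (Matrix.of fun a b : Fin n => ∑ i, c i * x i ^ (a + b : ℕ)).PosSemidef := by
  convert Matrix.posSemidef_conjTranspose_mul_self
    (Matrix.of fun (i : ι) (a : Fin n) => √(c i) * x i ^ (a : ℕ)) using 1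
  ext a b
  simp only [Matrix.of_apply, Matrix.mul_apply, Matrix.conjTranspose_apply, star_trivial]
  refine sum_congr rfl fun i _ => ?_
  rw [pow_add]
  have := Real.mul_self_sqrt (hc i)
  linear_combination (x i ^ (a : ℕ) * x i ^ (b : ℕ)) * this.symm

theorem det_moment_matrix_nonneg {ι : Type*} [Fintype ι] {l : ι → ℝ} (w : ι → ℝ)
    (hl : ∀ i, 0 < l i) :
    0 ≤ (!![moment l w (-1), moment l w 0, moment l w 1;
      moment l w 0, moment l w 1, moment l w 2;
      moment l w 1, moment l w 2, moment l w 3] : Matrix (Fin 3) (Fin 3) ℝ).det := by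
  have hl0 : ∀ i, l i ≠ 0 := fun i => (hl i).ne'
  have hankel : (!![moment l w (-1), moment l w 0, moment l w 1;
      moment l w 0, moment l w 1, moment l w 2;
      moment l w 1, moment l w 2, moment l w 3] : Matrix (Fin 3) (Fin 3) ℝ)
        = Matrix.of fun a b : Fin 3 => ∑ i, w i ^ 2 / l i * l i ^ (a + b : ℕ) := by
    ext a b
    simp only [Matrix.of_apply, sum_div_mul_pow_eq_moment w hl0]
    fin_cases a <;> fin_cases b <;> norm_num
  rw [hankel]
  exact (posSemidef_hankel (fun i => div_nonneg (sq_nonneg (w i)) (hl i).le) l 3).det_nonneg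

theorem transformed_L_sub_eq_det (m : ℤ → ℝ) (h0 : m 0 = 1) (h1 : m 1 ≠ 0)
    (hD : m 2 - m 1 ^ 2 ≠ 0) :
    (m 1 ^ 2 * m 1 - 2 * m 1 * m 2 + m 3) / (m 2 - m 1 ^ 2)
        * ((m 1 ^ 2 * m (-1) - 2 * m 1 * m 0 + m 1) / (m 2 - m 1 ^ 2)) - m 1 * m (-1)
      = m 1 / (m 2 - m 1 ^ 2) ^ 2 *
        (!![m (-1), 1, m 1; 1, m 1, m 2; m 1, m 2, m 3] : Matrix (Fin 3) (Fin 3) ℝ).det := by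
  rw [Matrix.det_fin_three, h0]
  simp only [Matrix.of_apply, Matrix.cons_val', Matrix.cons_val_zero, Matrix.cons_val_one,
    Matrix.cons_val_two, Matrix.empty_val', Matrix.cons_val_fin_one, Matrix.head_cons,
    Matrix.tail_cons, Matrix.head_fin_const]
  field_simp
  ring

theorem L_increase_formula_general
    (d : ℕ) (l : Fin d → ℝ) (hl : ∀ i, 0 < l i)
    (z z' : Fin d → ℝ)
    (hz : ∑ i, z i ^ 2 = 1)
    (μ μ' : ℤ → ℝ)
    (hμ : ∀ j : ℤ, μ j = ∑ i, l i ^ j * z i ^ 2)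
    (hμ' : ∀ j : ℤ, μ' j = ∑ i, l i ^ j * z' i ^ 2)
    (hnondeg : (μ 1) ^ 2 < μ 2)
    (hz' : ∀ i, z' i = (1 - l i / μ 1) * z i / Real.sqrt (μ 2 / (μ 1) ^ 2 - 1)) :
    μ' 1 * μ' (-1) - μ 1 * μ (-1)
      = μ 1 / (μ 2 - (μ 1) ^ 2) ^ 2 *
        (!![μ (-1), 1, μ 1; 1, μ 1, μ 2; μ 1, μ 2, μ 3] : Matrix (Fin 3) (Fin 3) ℝ).det ∧
    μ 1 * μ (-1) ≤ μ' 1 * μ' (-1) := by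
  have hμ_eq : μ = moment l z := funext hμ
  have hμ0 : μ 0 = 1 := by rw [hμ_eq, moment_zero, hz]
  have hμ1 : 0 < μ 1 := hμ_eq ▸ moment_pos hl (by rintro rfl; simp at hz) 1
  have hD : 0 < μ 2 - μ 1 ^ 2 := by linarith
  have hμ'_eq (j : ℤ) :
      μ' j = (μ 1 ^ 2 * μ j - 2 * μ 1 * μ (j + 1) + μ (j + 2)) / (μ 2 - μ 1 ^ 2) := by
    have hc : 0 ≤ μ 2 / μ 1 ^ 2 - 1 := by
      rw [sub_nonneg, le_div_iff₀ (by positivity)]; linarith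
    rw [hμ', ← moment, funext hz', moment_transform z (fun i => (hl i).ne') hμ1.ne', mul_pow,
      Real.sq_sqrt hc, ← hμ_eq]
    field_simp
  have formula := transformed_L_sub_eq_det μ hμ0 hμ1.ne' hD.ne'
  have hdet := det_moment_matrix_nonneg z hl
  rw [← hμ_eq, hμ0] at hdet
  rw [hμ'_eq 1, hμ'_eq (-1)]
  refine ⟨formula, ?_⟩
  have := mul_nonneg (div_nonneg hμ1.le (sq_nonneg (μ 2 - μ 1 ^ 2))) hdet
  linarith

theorem L_increase_formula
    (d : ℕ) (l : Fin d → ℝ) (hl : ∀ i, 0 < l i) (hmono : StrictMono l)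
    (z z' : Fin d → ℝ)
    (hz : ∑ i, z i ^ 2 = 1)
    (μ μ' : ℤ → ℝ)
    (hμ : ∀ j : ℤ, μ j = ∑ i, l i ^ j * z i ^ 2)
    (hμ' : ∀ j : ℤ, μ' j = ∑ i, l i ^ j * z' i ^ 2)
    (hnondeg : (μ 1) ^ 2 < μ 2)
    (hz' : ∀ i, z' i = (1 - l i / μ 1) * z i / Real.sqrt (μ 2 / (μ 1) ^ 2 - 1)) :
    μ' 1 * μ' (-1) - μ 1 * μ (-1)
      = μ 1 / (μ 2 - (μ 1) ^ 2) ^ 2 *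
        (!![μ (-1), 1, μ 1; 1, μ 1, μ 2; μ 1, μ 2, μ 3] : Matrix (Fin 3) (Fin 3) ℝ).det ∧
    μ 1 * μ (-1) ≤ μ' 1 * μ' (-1) :=
  L_increase_formula_general d l hl z z' hz μ μ' hμ hμ' hnondeg hz'
end

section
/- Under the same transformation T on discrete probability measures, D_k = μ₂ᵏ - (μ₁ᵏ)² satisfies D_{k+1} - D_k = det N_k / D_k², where N_k = [[1, μ₁ᵏ, μ₂ᵏ],[μ₁ᵏ, μ₂ᵏ, μ₃ᵏ],[μ₂ᵏ, μ₃ᵏ, μ₄ᵏ]]. In particular D_{k+1} ≥ D_k. -/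
open Finset

lemma psd_det_nonneg {n : ℕ} {A : Matrix (Fin n) (Fin n) ℝ} (h : A.PosSemidef) :
    0 ≤ A.det := by
  rw [h.1.det_eq_prod_eigenvalues]
  exact Finset.prod_nonneg fun i _ => h.eigenvalues_nonneg i

theorem D_increase_formula
    (d : ℕ) (l : Fin d → ℝ) (hl : ∀ i, 0 < l i) (hmono : StrictMono l)
    (z z' : Fin d → ℝ)
    (hz : ∑ i, z i ^ 2 = 1)
    (μ μ' : ℤ → ℝ)
    (hμ : ∀ j : ℤ, μ j = ∑ i, l i ^ j * z i ^ 2)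
    (hμ' : ∀ j : ℤ, μ' j = ∑ i, l i ^ j * z' i ^ 2)
    (hnondeg : (μ 1) ^ 2 < μ 2)
    (hz' : ∀ i, z' i = (1 - l i / μ 1) * z i / Real.sqrt (μ 2 / (μ 1) ^ 2 - 1)) :
    (μ' 2 - (μ' 1) ^ 2) - (μ 2 - (μ 1) ^ 2)
      = (!![1, μ 1, μ 2; μ 1, μ 2, μ 3; μ 2, μ 3, μ 4] : Matrix (Fin 3) (Fin 3) ℝ).det
        / (μ 2 - (μ 1) ^ 2) ^ 2 ∧
    μ 2 - (μ 1) ^ 2 ≤ μ' 2 - (μ' 1) ^ 2 := by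
  -- natural-power versions of the moments
  have m : ∀ k : ℕ, μ (k : ℤ) = ∑ i, l i ^ k * z i ^ 2 := by
    intro k
    rw [hμ]
    exact Finset.sum_congr rfl fun i _ => by rw [zpow_natCast]
  have m1 : μ 1 = ∑ i, l i ^ 1 * z i ^ 2 := m 1
  have m2 : μ 2 = ∑ i, l i ^ 2 * z i ^ 2 := m 2
  have m3 : μ 3 = ∑ i, l i ^ 3 * z i ^ 2 := m 3
  have m4 : μ 4 = ∑ i, l i ^ 4 * z i ^ 2 := m 4
  -- μ 1 > 0
  have hμ1 : 0 < μ 1 := by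
    obtain ⟨i0, hi0⟩ : ∃ i, z i ≠ 0 := by
      by_contra h
      push_neg at h
      simp [h] at hz
    rw [m1]
    refine Finset.sum_pos' (fun i _ => ?_) ⟨i0, Finset.mem_univ _, ?_⟩
    · have := (hl i).le
      positivity
    · have := hl i0
      positivity
  have hD : 0 < μ 2 - μ 1 ^ 2 := by linarith
  have hs : 0 < μ 2 / μ 1 ^ 2 - 1 := by
    have h' : μ 2 / μ 1 ^ 2 - 1 = (μ 2 - μ 1 ^ 2) / μ 1 ^ 2 := by
      field_simp
    rw [h']
    positivity
  have z'sq : ∀ i, z' i ^ 2 = (1 - l i / μ 1) ^ 2 * z i ^ 2 / (μ 2 / μ 1 ^ 2 - 1) := by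
    intro i
    rw [hz' i, div_pow, mul_pow, Real.sq_sqrt hs.le]
  -- formulas for μ' 1 and μ' 2
  have key : ∀ k : ℕ, μ' (k : ℤ)
      = (μ k - 2 * μ ((k : ℕ) + 1 : ℕ) / μ 1 + μ ((k : ℕ) + 2 : ℕ) / μ 1 ^ 2)
        / (μ 2 / μ 1 ^ 2 - 1) := by
    intro k
    have step : μ' (k : ℤ)
        = ∑ i, (l i ^ k * z i ^ 2 - 2 * (l i ^ (k + 1) * z i ^ 2) / μ 1
            + (l i ^ (k + 2) * z i ^ 2) / μ 1 ^ 2) / (μ 2 / μ 1 ^ 2 - 1) := by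
      rw [hμ']
      refine Finset.sum_congr rfl fun i _ => ?_
      rw [z'sq i, zpow_natCast]
      field_simp
      ring
    rw [step, ← Finset.sum_div, m k, m (k + 1), m (k + 2)]
    congr 1
    rw [Finset.sum_add_distrib, Finset.sum_sub_distrib, ← Finset.sum_div, ← Finset.sum_div,
      ← Finset.mul_sum]
  have h1 : μ' 1 = (μ 1 - 2 * μ 2 / μ 1 + μ 3 / μ 1 ^ 2) / (μ 2 / μ 1 ^ 2 - 1) := by
    have := key 1; norm_num at this ⊢; exact this
  have h2 : μ' 2 = (μ 2 - 2 * μ 3 / μ 1 + μ 4 / μ 1 ^ 2) / (μ 2 / μ 1 ^ 2 - 1) := by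
    have := key 2; norm_num at this ⊢; exact this
  -- the determinant identity
  have hdet : (!![1, μ 1, μ 2; μ 1, μ 2, μ 3; μ 2, μ 3, μ 4] : Matrix (Fin 3) (Fin 3) ℝ).det
      = 1 * (μ 2 * μ 4 - μ 3 * μ 3) - μ 1 * (μ 1 * μ 4 - μ 3 * μ 2)
        + μ 2 * (μ 1 * μ 3 - μ 2 * μ 2) := by
    simp [Matrix.det_fin_three]
    ring
  have heq : (μ' 2 - (μ' 1) ^ 2) - (μ 2 - (μ 1) ^ 2)
      = (!![1, μ 1, μ 2; μ 1, μ 2, μ 3; μ 2, μ 3, μ 4] : Matrix (Fin 3) (Fin 3) ℝ).det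
        / (μ 2 - (μ 1) ^ 2) ^ 2 := by
    rw [h1, h2, hdet]
    have hμ1' : μ 1 ≠ 0 := hμ1.ne'
    have hD' : μ 2 - μ 1 ^ 2 ≠ 0 := hD.ne'
    have hs' : μ 2 / μ 1 ^ 2 - 1 ≠ 0 := hs.ne'
    field_simp
    ring
  -- positive semidefiniteness of the moment matrix
  have hpsd : (!![1, μ 1, μ 2; μ 1, μ 2, μ 3; μ 2, μ 3, μ 4]
      : Matrix (Fin 3) (Fin 3) ℝ).PosSemidef := by
    set A : Matrix (Fin d) (Fin 3) ℝ :=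
      Matrix.of fun (i : Fin d) (a : Fin 3) => z i * l i ^ (a : ℕ) with hA
    have entry : ∀ a b : Fin 3, (A.conjTranspose * A) a b = μ (((a : ℕ) + (b : ℕ) : ℕ)) := by
      intro a b
      rw [m ((a : ℕ) + (b : ℕ))]
      simp only [Matrix.mul_apply, Matrix.conjTranspose_apply, hA, Matrix.of_apply, star_trivial]
      exact Finset.sum_congr rfl fun i _ => by rw [pow_add]; ring
    have m0 : μ 0 = 1 := by
      have h := m 0
      simp at h
      rwa [hz] at h
    have : (!![1, μ 1, μ 2; μ 1, μ 2, μ 3; μ 2, μ 3, μ 4] : Matrix (Fin 3) (Fin 3) ℝ)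
        = A.conjTranspose * A := by
      ext a b
      rw [entry a b]
      fin_cases a <;> fin_cases b <;> simp [m0] <;> norm_num
    rw [this]
    exact Matrix.posSemidef_conjTranspose_mul_self _
  have hdn : 0 ≤ (!![1, μ 1, μ 2; μ 1, μ 2, μ 3; μ 2, μ 3, μ 4]
      : Matrix (Fin 3) (Fin 3) ℝ).det := psd_det_nonneg hpsd
  refine ⟨heq, ?_⟩
  have : 0 ≤ (!![1, μ 1, μ 2; μ 1, μ 2, μ 3; μ 2, μ 3, μ 4]
      : Matrix (Fin 3) (Fin 3) ℝ).det / (μ 2 - μ 1 ^ 2) ^ 2 := by positivity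
  linarith [heq]
end

section
/- Let ν be a discrete probability measure on points 0 < λ₁ < ⋯ < λ_d with masses wᵢ. Then det M = ∑_{i<j<l} wᵢwⱼw_l (λᵢ-λⱼ)²(λᵢ-λ_l)²(λⱼ-λ_l)² / (λᵢλⱼλ_l), where M = [[μ₋₁, 1, μ₁],[1, μ₁, μ₂],[μ₁, μ₂, μ₃]] and μⱼ = ∑ᵢ λᵢʲ wᵢ. -/
open Finset


lemma tsum_swap12 {d : ℕ} (f : Fin d → Fin d → Fin d → ℝ) :
    (∑ i, ∑ j, ∑ k, f i j k) = ∑ i, ∑ j, ∑ k, f j i k :=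
  Finset.sum_comm

lemma tsum_swap23 {d : ℕ} (f : Fin d → Fin d → Fin d → ℝ) :
    (∑ i, ∑ j, ∑ k, f i j k) = ∑ i, ∑ j, ∑ k, f i k j :=
  Finset.sum_congr rfl fun _ _ => Finset.sum_comm

lemma tsum_cyc {d : ℕ} (f : Fin d → Fin d → Fin d → ℝ) :
    (∑ i, ∑ j, ∑ k, f i j k) = ∑ i, ∑ j, ∑ k, f k i j :=
  (tsum_swap12 f).trans (tsum_swap23 fun i j k => f j i k)

lemma tsum_cyc2 {d : ℕ} (f : Fin d → Fin d → Fin d → ℝ) :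
    (∑ i, ∑ j, ∑ k, f i j k) = ∑ i, ∑ j, ∑ k, f j k i :=
  (tsum_cyc f).trans (tsum_cyc fun i j k => f k i j)

lemma tsum_swap13 {d : ℕ} (f : Fin d → Fin d → Fin d → ℝ) :
    (∑ i, ∑ j, ∑ k, f i j k) = ∑ i, ∑ j, ∑ k, f k j i :=
  (tsum_cyc f).trans (tsum_swap12 fun i j k => f k i j)

lemma triple_prod {d : ℕ} (f g h : Fin d → ℝ) :
    (∑ i, f i) * (∑ i, g i) * (∑ i, h i) = ∑ i, ∑ j, ∑ k, f i * g j * h k := by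
  rw [Finset.sum_mul_sum, Finset.sum_mul]
  refine Finset.sum_congr rfl fun i _ => ?_
  rw [Finset.sum_mul]
  exact Finset.sum_congr rfl fun j _ => Finset.mul_sum _ _ _

lemma keyG (x y z : ℝ) (hx : x ≠ 0) (hy : y ≠ 0) (hz : z ≠ 0) :
    (y * z ^ 3 / x - y ^ 2 * z ^ 2 / x - z ^ 3 + y ^ 2 * z + x * z ^ 2 - x * y * z)
      + (x * z ^ 3 / y - x ^ 2 * z ^ 2 / y - z ^ 3 + x ^ 2 * z + y * z ^ 2 - y * x * z)
      + (z * y ^ 3 / x - z ^ 2 * y ^ 2 / x - y ^ 3 + z ^ 2 * y + x * y ^ 2 - x * z * y)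
      + (y * x ^ 3 / z - y ^ 2 * x ^ 2 / z - x ^ 3 + y ^ 2 * x + z * x ^ 2 - z * y * x)
      + (x * y ^ 3 / z - x ^ 2 * y ^ 2 / z - y ^ 3 + x ^ 2 * y + z * y ^ 2 - z * x * y)
      + (z * x ^ 3 / y - z ^ 2 * x ^ 2 / y - x ^ 3 + z ^ 2 * x + y * x ^ 2 - y * z * x)
      = (x - y) ^ 2 * (x - z) ^ 2 * (y - z) ^ 2 / (x * y * z) := by
  field_simp
  ring

set_option maxHeartbeats 1000000 in
theorem det_moment_matrix_formula
    (d : ℕ) (l w : Fin d → ℝ)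
    (hl : ∀ i, 0 < l i) (hmono : StrictMono l)
    (hw : ∀ i, 0 ≤ w i) (hsum : ∑ i, w i = 1)
    (μ : ℤ → ℝ) (hμ : ∀ j : ℤ, μ j = ∑ i, l i ^ j * w i) :
    (!![μ (-1), 1, μ 1; 1, μ 1, μ 2; μ 1, μ 2, μ 3] : Matrix (Fin 3) (Fin 3) ℝ).det
      = ∑ i, ∑ j, ∑ k,
          (if i < j ∧ j < k then
            w i * w j * w k * (l i - l j) ^ 2 * (l i - l k) ^ 2 * (l j - l k) ^ 2
              / (l i * l j * l k)
          else 0) := by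
  have hne : ∀ i, l i ≠ 0 := fun i => (hl i).ne'
  set T : Fin d → Fin d → Fin d → ℝ := fun i j k =>
    w i * w j * w k * (l i - l j) ^ 2 * (l i - l k) ^ 2 * (l j - l k) ^ 2
      / (l i * l j * l k) with hT
  set F : Fin d → Fin d → Fin d → ℝ := fun i j k =>
    w i * w j * w k * (l j * l k ^ 3 / l i - l j ^ 2 * l k ^ 2 / l i - l k ^ 3
      + l j ^ 2 * l k + l i * l k ^ 2 - l i * l j * l k) with hF
  -- moment rewrites
  have hm1 : μ (-1) = ∑ i, w i / l i := by
    rw [hμ]; exact Finset.sum_congr rfl fun i _ => by rw [zpow_neg, zpow_one]; ring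
  have hm2 : μ 1 = ∑ i, l i * w i := by
    rw [hμ]; exact Finset.sum_congr rfl fun i _ => by rw [zpow_one]
  have hm3 : μ 2 = ∑ i, l i ^ 2 * w i := by
    rw [hμ]; exact Finset.sum_congr rfl fun i _ => by
      rw [show (2:ℤ) = ((2:ℕ):ℤ) from rfl, zpow_natCast]
  have hm4 : μ 3 = ∑ i, l i ^ 3 * w i := by
    rw [hμ]; exact Finset.sum_congr rfl fun i _ => by
      rw [show (3:ℤ) = ((3:ℕ):ℤ) from rfl, zpow_natCast]
  -- step 1 : determinant as a triple sum
  have hdet : (!![μ (-1), 1, μ 1; 1, μ 1, μ 2; μ 1, μ 2, μ 3]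
      : Matrix (Fin 3) (Fin 3) ℝ).det = ∑ i, ∑ j, ∑ k, F i j k := by
    have key : (!![μ (-1), 1, μ 1; 1, μ 1, μ 2; μ 1, μ 2, μ 3]
        : Matrix (Fin 3) (Fin 3) ℝ).det
        = (∑ i, w i / l i) * (∑ i, l i * w i) * (∑ i, l i ^ 3 * w i)
          - (∑ i, w i / l i) * (∑ i, l i ^ 2 * w i) * (∑ i, l i ^ 2 * w i)
          - (∑ i, w i) * (∑ i, w i) * (∑ i, l i ^ 3 * w i)
          + (∑ i, w i) * (∑ i, l i ^ 2 * w i) * (∑ i, l i * w i)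
          + (∑ i, l i * w i) * (∑ i, w i) * (∑ i, l i ^ 2 * w i)
          - (∑ i, l i * w i) * (∑ i, l i * w i) * (∑ i, l i * w i) := by
      rw [Matrix.det_fin_three]
      simp [Matrix.cons_val_zero, Matrix.cons_val_one]
      rw [hm1, hm2, hm3, hm4, hsum]
      ring
    rw [key, triple_prod, triple_prod, triple_prod, triple_prod, triple_prod,
      triple_prod]
    simp only [← Finset.sum_sub_distrib, ← Finset.sum_add_distrib]
    refine Finset.sum_congr rfl fun i _ => Finset.sum_congr rfl fun j _ =>
      Finset.sum_congr rfl fun k _ => ?_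
    simp only [hF]
    ring
  -- step 2 : 6 * (triple sum of F) = triple sum of T
  have h6 : (6:ℝ) * (∑ i, ∑ j, ∑ k, F i j k) = ∑ i, ∑ j, ∑ k, T i j k := by
    have r1 := tsum_swap12 F
    have r2 := tsum_swap23 F
    have r3 := tsum_swap13 F
    have r4 := tsum_cyc F
    have r5 := tsum_cyc2 F
    have : (6:ℝ) * (∑ i, ∑ j, ∑ k, F i j k)
        = ∑ i, ∑ j, ∑ k, (F i j k + F j i k + F i k j + F k j i + F k i j
            + F j k i) := by
      simp only [Finset.sum_add_distrib]
      rw [← r1, ← r2, ← r3, ← r4, ← r5]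
      ring
    rw [this]
    refine Finset.sum_congr rfl fun i _ => Finset.sum_congr rfl fun j _ =>
      Finset.sum_congr rfl fun k _ => ?_
    simp only [hF, hT]
    linear_combination (w i * w j * w k) * keyG (l i) (l j) (l k) (hne i) (hne j) (hne k)
  -- step 3 : triple sum of T = 6 * ordered sum
  have hdecomp : ∀ i j k : Fin d,
      T i j k = (if i < j ∧ j < k then T i j k else 0)
        + (if i < k ∧ k < j then T i j k else 0)
        + (if j < i ∧ i < k then T i j k else 0)
        + (if k < i ∧ i < j then T i j k else 0)
        + (if j < k ∧ k < i then T i j k else 0)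
        + (if k < j ∧ j < i then T i j k else 0) := by
    have h0 : ∀ a b c : Fin d, a = b ∨ a = c ∨ b = c → T a b c = 0 := by
      rintro a b c (rfl | rfl | rfl) <;> simp [hT, sub_self]
    intro i j k
    split_ifs <;>
      first
        | (exfalso; omega)
        | ring1
        | (rw [h0 i j k (by omega)]; try norm_num)
  have Ts23 : ∀ a b c : Fin d, T a b c = T a c b := by
    intro a b c; simp only [hT]; ring
  have Ts12 : ∀ a b c : Fin d, T a b c = T b a c := by
    intro a b c; simp only [hT]; ring
  have Ts13 : ∀ a b c : Fin d, T a b c = T c b a := by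
    intro a b c; simp only [hT]; ring
  have Tc : ∀ a b c : Fin d, T a b c = T c a b := by
    intro a b c; simp only [hT]; ring
  have Tc2 : ∀ a b c : Fin d, T a b c = T b c a := by
    intro a b c; simp only [hT]; ring
  have hR : (∑ i, ∑ j, ∑ k, T i j k)
      = 6 * ∑ i, ∑ j, ∑ k, (if i < j ∧ j < k then T i j k else 0) := by
    have step1 : (∑ i, ∑ j, ∑ k, T i j k)
        = ∑ i, ∑ j, ∑ k, ((if i < j ∧ j < k then T i j k else 0)
            + (if i < k ∧ k < j then T i j k else 0)
            + (if j < i ∧ i < k then T i j k else 0)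
            + (if k < i ∧ i < j then T i j k else 0)
            + (if j < k ∧ k < i then T i j k else 0)
            + (if k < j ∧ j < i then T i j k else 0)) :=
      Finset.sum_congr rfl fun i _ => Finset.sum_congr rfl fun j _ =>
        Finset.sum_congr rfl fun k _ => hdecomp i j k
    have c2 : (∑ i, ∑ j, ∑ k, (if i < k ∧ k < j then T i j k else 0))
        = ∑ i, ∑ j, ∑ k, (if i < j ∧ j < k then T i j k else 0) := by
      rw [tsum_swap23 (fun i j k => if i < k ∧ k < j then T i j k else 0)]
      exact Finset.sum_congr rfl fun i _ => Finset.sum_congr rfl fun j _ =>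
        Finset.sum_congr rfl fun k _ => by
          rw [show T i k j = T i j k from (Ts23 i j k).symm]
    have c3 : (∑ i, ∑ j, ∑ k, (if j < i ∧ i < k then T i j k else 0))
        = ∑ i, ∑ j, ∑ k, (if i < j ∧ j < k then T i j k else 0) := by
      rw [tsum_swap12 (fun i j k => if j < i ∧ i < k then T i j k else 0)]
      exact Finset.sum_congr rfl fun i _ => Finset.sum_congr rfl fun j _ =>
        Finset.sum_congr rfl fun k _ => by
          rw [show T j i k = T i j k from (Ts12 i j k).symm]
    have c4 : (∑ i, ∑ j, ∑ k, (if k < i ∧ i < j then T i j k else 0))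
        = ∑ i, ∑ j, ∑ k, (if i < j ∧ j < k then T i j k else 0) := by
      rw [tsum_cyc2 (fun i j k => if k < i ∧ i < j then T i j k else 0)]
      exact Finset.sum_congr rfl fun i _ => Finset.sum_congr rfl fun j _ =>
        Finset.sum_congr rfl fun k _ => by
          rw [show T j k i = T i j k from (Tc2 i j k).symm]
    have c5 : (∑ i, ∑ j, ∑ k, (if j < k ∧ k < i then T i j k else 0))
        = ∑ i, ∑ j, ∑ k, (if i < j ∧ j < k then T i j k else 0) := by
      rw [tsum_cyc (fun i j k => if j < k ∧ k < i then T i j k else 0)]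
      exact Finset.sum_congr rfl fun i _ => Finset.sum_congr rfl fun j _ =>
        Finset.sum_congr rfl fun k _ => by
          rw [show T k i j = T i j k from (Tc i j k).symm]
    have c6 : (∑ i, ∑ j, ∑ k, (if k < j ∧ j < i then T i j k else 0))
        = ∑ i, ∑ j, ∑ k, (if i < j ∧ j < k then T i j k else 0) := by
      rw [tsum_swap13 (fun i j k => if k < j ∧ j < i then T i j k else 0)]
      exact Finset.sum_congr rfl fun i _ => Finset.sum_congr rfl fun j _ =>
        Finset.sum_congr rfl fun k _ => by
          rw [show T k j i = T i j k from (Ts13 i j k).symm]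
    rw [step1]
    simp only [Finset.sum_add_distrib]
    rw [c2, c3, c4, c5, c6]
    ring
  have hgoal : (∑ i, ∑ j, ∑ k, (if i < j ∧ j < k then T i j k else 0))
      = ∑ i, ∑ j, ∑ k,
          (if i < j ∧ j < k then
            w i * w j * w k * (l i - l j) ^ 2 * (l i - l k) ^ 2 * (l j - l k) ^ 2
              / (l i * l j * l k)
          else 0) := by
    simp only [hT]
  rw [hdet, ← hgoal]
  linarith [h6, hR]
end

section
/- If a probability measure ν on points 0 < λ₁ < ⋯ < λ_d satisfies det M = 0, where M is the moment matrix [[μ₋₁,1,μ₁],[1,μ₁,μ₂],[μ₁,μ₂,μ₃]], then ν is supported on at most two points. -/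
open Finset

theorem det_zero_implies_two_point_support
    (d : ℕ) (l w : Fin d → ℝ)
    (hl : ∀ i, 0 < l i) (hmono : StrictMono l)
    (hw : ∀ i, 0 ≤ w i) (hsum : ∑ i, w i = 1)
    (μ : ℤ → ℝ) (hμ : ∀ j : ℤ, μ j = ∑ i, l i ^ j * w i)
    (hdet : (!![μ (-1), 1, μ 1; 1, μ 1, μ 2; μ 1, μ 2, μ 3] : Matrix (Fin 3) (Fin 3) ℝ).det = 0) :
    ∃ i j : Fin d, ∀ k : Fin d, w k ≠ 0 → k = i ∨ k = j := by
  obtain ⟨x, hx0, hMx⟩ :=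
    (Matrix.exists_mulVec_eq_zero_iff
      (M := (!![μ (-1), 1, μ 1; 1, μ 1, μ 2; μ 1, μ 2, μ 3] : Matrix (Fin 3) (Fin 3) ℝ))).mpr hdet
  have lne : ∀ i, l i ≠ 0 := fun i => (hl i).ne'
  -- Row equations
  have e0 := congrFun hMx 0
  have e1 := congrFun hMx 1
  have e2 := congrFun hMx 2
  simp [Matrix.mulVec, dotProduct, Fin.sum_univ_three] at e0 e1 e2
  -- moment expressions
  have hm1 : μ (-1) = ∑ i, w i / l i := by
    rw [hμ]; exact Finset.sum_congr rfl fun i _ => by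
      rw [zpow_neg_one]; field_simp
  have h1 : μ 1 = ∑ i, l i * w i := by
    rw [hμ]; exact Finset.sum_congr rfl fun i _ => by norm_num
  have h2 : μ 2 = ∑ i, l i ^ 2 * w i := by
    rw [hμ]; exact Finset.sum_congr rfl fun i _ => by
      rw [show ((2:ℤ)) = ((2:ℕ):ℤ) by norm_num, zpow_natCast]
  have h3 : μ 3 = ∑ i, l i ^ 3 * w i := by
    rw [hμ]; exact Finset.sum_congr rfl fun i _ => by
      rw [show ((3:ℤ)) = ((3:ℕ):ℤ) by norm_num, zpow_natCast]
  simp only [hm1, h1, h2, h3] at e0 e1 e2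
  -- quadratic form identity
  have hQ : ∑ i, (w i / l i) * (x 0 + x 1 * l i + x 2 * l i ^ 2) ^ 2 = 0 := by
    have expand : ∀ i ∈ (univ : Finset (Fin d)),
        (w i / l i) * (x 0 + x 1 * l i + x 2 * l i ^ 2) ^ 2 =
        (w i / l i) * (x 0 ^ 2) + w i * (2 * x 0 * x 1)
          + (l i * w i) * (x 1 ^ 2 + 2 * x 0 * x 2)
          + (l i ^ 2 * w i) * (2 * x 1 * x 2) + (l i ^ 3 * w i) * (x 2 ^ 2) := by
      intro i _
      have hli := lne i
      field_simp
      ring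
    rw [Finset.sum_congr rfl expand]
    simp only [Finset.sum_add_distrib, ← Finset.sum_mul]
    linear_combination x 0 * e0 + x 1 * e1 + x 2 * e2 + 2 * x 0 * x 1 * hsum
  -- each term is zero
  have hterm : ∀ i ∈ (univ : Finset (Fin d)),
      0 ≤ (w i / l i) * (x 0 + x 1 * l i + x 2 * l i ^ 2) ^ 2 := fun i _ =>
    mul_nonneg (div_nonneg (hw i) (hl i).le) (sq_nonneg _)
  have hzero := (Finset.sum_eq_zero_iff_of_nonneg hterm).mp hQ
  have key : ∀ i, w i ≠ 0 → x 0 + x 1 * l i + x 2 * l i ^ 2 = 0 := by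
    intro i hi
    have hwpos : 0 < w i / l i := div_pos (lt_of_le_of_ne (hw i) (Ne.symm hi)) (hl i)
    have := hzero i (mem_univ i)
    have hsq : (x 0 + x 1 * l i + x 2 * l i ^ 2) ^ 2 = 0 := by
      rcases mul_eq_zero.mp this with h | h
      · exact absurd h hwpos.ne'
      · exact h
    exact pow_eq_zero_iff (by norm_num) |>.mp hsq
  -- no three distinct supported points
  have H3 : ∀ a b c : Fin d, w a ≠ 0 → w b ≠ 0 → w c ≠ 0 →
      a ≠ b → a ≠ c → b ≠ c → False := by
    intro a b c ha hb hc hab hac hbc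
    have pa := key a ha
    have pb := key b hb
    have pc := key c hc
    have lab : l a ≠ l b := fun h => hab (hmono.injective h)
    have lac : l a ≠ l c := fun h => hac (hmono.injective h)
    have lbc : l b ≠ l c := fun h => hbc (hmono.injective h)
    have hab' : x 1 + x 2 * (l a + l b) = 0 := by
      have hne : l a - l b ≠ 0 := sub_ne_zero.mpr lab
      have : (l a - l b) * (x 1 + x 2 * (l a + l b)) = 0 := by
        linear_combination pa - pb
      rcases mul_eq_zero.mp this with h | h
      · exact absurd h hne
      · exact h
    have hac' : x 1 + x 2 * (l a + l c) = 0 := by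
      have hne : l a - l c ≠ 0 := sub_ne_zero.mpr lac
      have : (l a - l c) * (x 1 + x 2 * (l a + l c)) = 0 := by
        linear_combination pa - pc
      rcases mul_eq_zero.mp this with h | h
      · exact absurd h hne
      · exact h
    have hx2 : x 2 = 0 := by
      have hne : l b - l c ≠ 0 := sub_ne_zero.mpr lbc
      have : x 2 * (l b - l c) = 0 := by linear_combination hab' - hac'
      rcases mul_eq_zero.mp this with h | h
      · exact h
      · exact absurd h hne
    have hx1 : x 1 = 0 := by linear_combination hab' - (l a + l b) * hx2
    have hx00 : x 0 = 0 := by linear_combination pa - l a * hx1 - l a ^ 2 * hx2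
    exact hx0 (funext fun k => by fin_cases k <;> assumption)
  -- there is at least one supported point
  have hex : ∃ i, w i ≠ 0 := by
    by_contra h
    push_neg at h
    rw [Finset.sum_eq_zero (fun i _ => h i)] at hsum
    norm_num at hsum
  obtain ⟨i, hi⟩ := hex
  by_cases h : ∃ j, w j ≠ 0 ∧ j ≠ i
  · obtain ⟨j, hj, hji⟩ := h
    refine ⟨i, j, fun k hk => ?_⟩
    by_contra hkij
    push_neg at hkij
    exact H3 k i j hk hi hj hkij.1 hkij.2 (Ne.symm hji)
  · push_neg at h
    exact ⟨i, i, fun k hk => Or.inl (h k hk)⟩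
end

section
/- Define r(p) = p(1-p)(ρ-1)² / ([p + ρ(1-p)][(1-p) + ρp]) for ρ > 1 and p ∈ [0,1]. Then r is symmetric about 1/2 (r(p) = r(1-p)), increasing on [0,1/2], and its maximum is r(1/2) = ((ρ-1)/(ρ+1))². -/
theorem rate_function_properties
    (ρ : ℝ) (hρ : 1 < ρ)
    (r : ℝ → ℝ)
    (hr : ∀ p, r p = p * (1 - p) * (ρ - 1) ^ 2
        / ((p + ρ * (1 - p)) * ((1 - p) + ρ * p))) :
    (∀ p ∈ Set.Icc (0 : ℝ) 1, r p = r (1 - p)) ∧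
    StrictMonoOn r (Set.Icc (0 : ℝ) (1 / 2)) ∧
    (∀ p ∈ Set.Icc (0 : ℝ) 1, r p ≤ r (1 / 2)) ∧
    r (1 / 2) = ((ρ - 1) / (ρ + 1)) ^ 2 := by
  have hρ0 : (0:ℝ) < ρ := by linarith
  set c : ℝ := (ρ - 1) ^ 2 with hcdef
  have hc : 0 < c := by rw [hcdef]; nlinarith
  have key : ∀ p, r p = c * (p * (1 - p)) / (ρ + c * (p * (1 - p))) := by
    intro p
    rw [hr p]
    have hden : (p + ρ * (1 - p)) * ((1 - p) + ρ * p)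
        = ρ + c * (p * (1 - p)) := by rw [hcdef]; ring
    rw [hden]
    congr 1
    ring
  have gmono : ∀ s t : ℝ, 0 ≤ s → s < t →
      c * s / (ρ + c * s) < c * t / (ρ + c * t) := by
    intro s t hs hst
    have hd1 : 0 < ρ + c * s := by nlinarith [mul_nonneg hc.le hs]
    have hd2 : 0 < ρ + c * t := by nlinarith [mul_nonneg hc.le (hs.trans hst.le)]
    rw [div_lt_div_iff₀ hd1 hd2]
    nlinarith [mul_pos hc hρ0, mul_pos (mul_pos hc hρ0) (sub_pos.mpr hst)]
  have gmono_le : ∀ s t : ℝ, 0 ≤ s → s ≤ t →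
      c * s / (ρ + c * s) ≤ c * t / (ρ + c * t) := by
    intro s t hs hst
    rcases eq_or_lt_of_le hst with h | h
    · rw [h]
    · exact (gmono s t hs h).le
  refine ⟨?_, ?_, ?_, ?_⟩
  · intro p _
    rw [key, key]
    ring_nf
  · intro a ha b hb hab
    rw [key, key]
    apply gmono
    · nlinarith [ha.1, ha.2]
    · nlinarith [ha.1, ha.2, hb.1, hb.2]
  · intro p hp
    rw [key, key]
    apply gmono_le
    · nlinarith [hp.1, hp.2, sq_nonneg (p - 1/2)]
    · nlinarith [hp.1, hp.2, sq_nonneg (p - 1/2)]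
  · rw [key]
    have h1 : ρ + c * ((1:ℝ)/2 * (1 - 1/2)) = (ρ + 1)^2 / 4 := by
      rw [hcdef]; ring
    rw [h1]
    have hne : (ρ + 1) ≠ 0 := by linarith
    field_simp
    ring
end

section
/- For the two-point measure ν*_p on {m,M} (ν*_p(m)=p, ν*_p(M)=1−p, 0<p<1, 0<m<M), define H(ν*_p, λ) = [M(1−p)+mp−λ]²[Mp+m(1−p)−λ]² / (p²(1−p)²(M−m)⁴). Then H(ν*_p, m) = H(ν*_p, M) = 1, and for λ ∈ (m,M), H(ν*_p,λ) < 1 if and only if ((M−λ)²+(λ−m)²)/(2(M−m)²) > (1/2 − p)², i.e. p ∈ (1/2 − s(λ), 1/2 + s(λ)) with s(λ) = √((M−λ)²+(λ−m)²)/(2(M−m)). -/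
theorem H_fixed_point_stability_condition
    (m M : ℝ) (hm : 0 < m) (hmM : m < M)
    (p : ℝ) (hp0 : 0 < p) (hp1 : p < 1)
    (H s : ℝ → ℝ)
    (hH : ∀ l, H l = (M * (1 - p) + m * p - l) ^ 2 * (M * p + m * (1 - p) - l) ^ 2
        / (p ^ 2 * (1 - p) ^ 2 * (M - m) ^ 4))
    (hs : ∀ l, s l = Real.sqrt ((M - l) ^ 2 + (l - m) ^ 2) / (2 * (M - m))) :
    H m = 1 ∧ H M = 1 ∧
    ∀ l, m < l → l < M →
      (H l < 1 ↔ (1 / 2 - s l < p ∧ p < 1 / 2 + s l)) := by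
  have hMm : (0:ℝ) < M - m := by linarith
  have hp1' : (0:ℝ) < 1 - p := by linarith
  have hden : (0:ℝ) < p ^ 2 * (1 - p) ^ 2 * (M - m) ^ 4 :=
    mul_pos (mul_pos (pow_pos hp0 2) (pow_pos hp1' 2)) (pow_pos hMm 4)
  refine ⟨?_, ?_, ?_⟩
  · rw [hH, div_eq_one_iff_eq (ne_of_gt hden)]; ring
  · rw [hH, div_eq_one_iff_eq (ne_of_gt hden)]; ring
  · intro l hml hlM
    rw [hH, hs, div_lt_one hden]
    have hS : (0:ℝ) < (M - l) ^ 2 + (l - m) ^ 2 := by nlinarith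
    have hsq : Real.sqrt ((M - l) ^ 2 + (l - m) ^ 2) ^ 2 = (M - l) ^ 2 + (l - m) ^ 2 :=
      Real.sq_sqrt hS.le
    have hsqnn : 0 ≤ Real.sqrt ((M - l) ^ 2 + (l - m) ^ 2) := Real.sqrt_nonneg _
    set r := Real.sqrt ((M - l) ^ 2 + (l - m) ^ 2) with hr
    have hu : (M + m - 2 * l) ^ 2 - (M - m) ^ 2 < 0 := by nlinarith
    have hid : (M * (1 - p) + m * p - l) ^ 2 * (M * p + m * (1 - p) - l) ^ 2
        - p ^ 2 * (1 - p) ^ 2 * (M - m) ^ 4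
        = ((M + m - 2 * l) ^ 2 - (M - m) ^ 2)
          * (((M - l) ^ 2 + (l - m) ^ 2) - (2 * (M - m) * (p - 1 / 2)) ^ 2) / 8 := by
      ring
    have key : (M * (1 - p) + m * p - l) ^ 2 * (M * p + m * (1 - p) - l) ^ 2
        < p ^ 2 * (1 - p) ^ 2 * (M - m) ^ 4
        ↔ (2 * (M - m) * (p - 1 / 2)) ^ 2 < (M - l) ^ 2 + (l - m) ^ 2 := by
      constructor
      · intro h
        have hx : ((M + m - 2 * l) ^ 2 - (M - m) ^ 2)
            * (((M - l) ^ 2 + (l - m) ^ 2) - (2 * (M - m) * (p - 1 / 2)) ^ 2) < 0 := by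
          linarith [hid]
        rcases mul_neg_iff.mp hx with ⟨h1, _⟩ | ⟨_, h2⟩
        · linarith
        · linarith
      · intro h
        have hx := mul_neg_of_neg_of_pos hu
          (sub_pos.mpr h)
        linarith [hid]
    rw [key]
    have h2Mm : (0:ℝ) < 2 * (M - m) := by linarith
    have habs : (2 * (M - m) * (p - 1 / 2)) ^ 2 < (M - l) ^ 2 + (l - m) ^ 2
        ↔ |2 * (M - m) * (p - 1 / 2)| < r := by
      constructor
      · intro h
        refine lt_of_pow_lt_pow_left₀ 2 hsqnn ?_
        rw [hsq, sq_abs]; exact h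
      · intro h
        have := pow_lt_pow_left₀ h (abs_nonneg _) (by norm_num : 2 ≠ 0)
        rwa [sq_abs, hsq] at this
    rw [habs, abs_lt]
    constructor
    · rintro ⟨h1, h2⟩
      constructor
      · have h1' : (1 / 2 - p) * (2 * (M - m)) < r := by linarith
        have := (lt_div_iff₀ h2Mm).mpr h1'
        linarith
      · have h2' : (p - 1 / 2) * (2 * (M - m)) < r := by linarith
        have := (lt_div_iff₀ h2Mm).mpr h2'
        linarith
    · rintro ⟨h1, h2⟩
      constructor
      · have h1' : 1 / 2 - p < r / (2 * (M - m)) := by linarith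
        have := (lt_div_iff₀ h2Mm).mp h1'
        linarith
      · have h2' : p - 1 / 2 < r / (2 * (M - m)) := by linarith
        have := (lt_div_iff₀ h2Mm).mp h2'
        linarith
end
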